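/- arXiv:1704.03318 — 2 statements merged into one kernel-verified Lean document; each statement's English description precedes it below -/
import Mathlib

section
/- Let $(n_i)$ be defined by $n_2 = 2$ and $n_{i+1} = (\lfloor n_i/2 \rfloor + 1) + (\lfloor n_i/2 \rfloor + 1)\cdot \lceil n_i/2 \rceil$. Then for every $\ell \geq 4$, $n_\ell \geq 2^{2^{\ell-4}+2}$. -/
theorem stmt_1 (n : ℕ → ℕ) (h2 : n 2 = 2)
    (hrec : ∀ i, 2 ≤ i → n (i + 1) = (n i / 2 + 1) + (n i / 2 + 1) * ((n i + 1) / 2)) :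
    ∀ ℓ, 4 ≤ ℓ → 2 ^ (2 ^ (ℓ - 4) + 2) ≤ n ℓ := by
  intro ℓ hℓ
  induction ℓ, hℓ using Nat.le_induction with
  | base =>
    have h3 : n 3 = 4 := by rw [hrec 2 (by norm_num), h2]
    have h4 : n 4 = 9 := by rw [hrec 3 (by norm_num), h3]
    simp [h4]
  | succ ℓ hℓ ih =>
    set e := ℓ - 4 with he
    have hℓ1 : ℓ + 1 - 4 = e + 1 := by omega
    rw [hℓ1]
    set K := 2 ^ (2 ^ e + 1) with hK
    have htarget : 2 ^ (2 ^ (e + 1) + 2) = K * K := by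
      rw [hK, ← pow_add]
      congr 1
      ring
    have hih : 2 * K ≤ n ℓ := by
      calc 2 * K = 2 ^ (2 ^ e + 2) := by rw [hK]; ring
        _ ≤ n ℓ := ih
    have hK2 : K ≤ n ℓ / 2 := Nat.le_div_iff_mul_le (by norm_num) |>.mpr (by omega)
    have hK3 : K ≤ (n ℓ + 1) / 2 := le_trans hK2 (Nat.div_le_div_right (by omega))
    rw [hrec ℓ (by omega), htarget]
    calc K * K ≤ (n ℓ / 2 + 1) * ((n ℓ + 1) / 2) :=
          Nat.mul_le_mul (by omega) hK3
      _ ≤ (n ℓ / 2 + 1) + (n ℓ / 2 + 1) * ((n ℓ + 1) / 2) := Nat.le_add_left _ _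
end

section
/- Mask construction, second property: Let $P'$ be a finite set, $M \subseteq P'$ a subset, and suppose $P' \setminus M$ is partitioned into disjoint nonempty sets $\{Q_q\}_{q \in M}$ indexed by elements of $M$. Define $P_q = (M \setminus \{q\}) \cup Q_q$. Then for every $p \in P'$ there exists $\bar{p} \in P'$ such that for every $q \in M$, the set $P_q$ contains $p$ or contains $\bar{p}$. -/
theorem stmt_4 {α : Type*} [DecidableEq α] (P' M : Finset α) (Q : α → Finset α)
    (hM : M ⊆ P')
    (hQsub : ∀ q ∈ M, Q q ⊆ P' \ M)
    (hQne : ∀ q ∈ M, (Q q).Nonempty)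
    (hdisj : ∀ q ∈ M, ∀ q' ∈ M, q ≠ q' → Disjoint (Q q) (Q q'))
    (hcover : M.biUnion Q = P' \ M) :
    ∀ p ∈ P', ∃ pbar ∈ P', ∀ q ∈ M, p ∈ (M.erase q) ∪ Q q ∨ pbar ∈ (M.erase q) ∪ Q q := by
  intro p hp
  by_cases hpM : p ∈ M
  · obtain ⟨b, hb⟩ := hQne p hpM
    refine ⟨b, (Finset.mem_sdiff.mp (hQsub p hpM hb)).1, ?_⟩
    intro q hq
    by_cases hqp : q = p
    · subst hqp
      exact Or.inr (Finset.mem_union_right _ hb)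
    · exact Or.inl (Finset.mem_union_left _ (Finset.mem_erase.mpr ⟨fun h => hqp h.symm, hpM⟩))
  · have hpd : p ∈ M.biUnion Q := by
      rw [hcover]; exact Finset.mem_sdiff.mpr ⟨hp, hpM⟩
    obtain ⟨q0, hq0, hpq0⟩ := Finset.mem_biUnion.mp hpd
    refine ⟨q0, hM hq0, ?_⟩
    intro q hq
    by_cases hqq : q = q0
    · subst hqq
      exact Or.inl (Finset.mem_union_right _ hpq0)
    · exact Or.inr (Finset.mem_union_left _ (Finset.mem_erase.mpr ⟨fun h => hqq h.symm, hq0⟩))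
end
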